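/- arXiv:2209.03101 — 12 statements merged into one kernel-verified Lean document; each statement's English description precedes it below -/
import Mathlib

section
/- Let (X,d) be a metric space with at least two points. The metric d fails to be round (i.e., there exist x ∈ X and r > 0 such that the closure of the open ball B(x,r) is a proper subset of the closed ball B[x,r]) if and only if there exist a nonempty open set U ⊆ X and a point x ∈ X \ U such that the function u ↦ d(x,u) attains a minimum on U. -/
theorem not_round_iff_min_on_open {X : Type*} [MetricSpace X] (h2 : ∃ x y : X, x ≠ y) :
    (∃ (x : X) (r : ℝ), 0 < r ∧ closure (Metric.ball x r) ⊂ Metric.closedBall x r) ↔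
    ∃ U : Set X, IsOpen U ∧ U.Nonempty ∧ ∃ x ∉ U, ∃ y ∈ U, ∀ u ∈ U, dist x y ≤ dist x u := by
  constructor
  · rintro ⟨x, r, hr, hsub, hne⟩
    obtain ⟨y, hy, hy'⟩ := Set.not_subset.1 hne
    refine ⟨(closure (Metric.ball x r))ᶜ, isClosed_closure.isOpen_compl, ⟨y, hy'⟩, x,
      fun hx => hx (subset_closure (Metric.mem_ball_self hr)), y, hy', fun u hu => ?_⟩
    have h1 : dist x y ≤ r := by simpa [dist_comm] using Metric.mem_closedBall.1 hy
    have h2 : r ≤ dist x u := by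
      by_contra h
      exact hu (subset_closure (by simpa [Metric.mem_ball, dist_comm] using lt_of_not_ge h))
    linarith
  · rintro ⟨U, hU, hUne, x, hxU, y, hyU, hmin⟩
    have hxy : x ≠ y := fun h => hxU (h ▸ hyU)
    have hr : 0 < dist x y := dist_pos.2 hxy
    refine ⟨x, dist x y, hr, Metric.closure_ball_subset_closedBall, Set.not_subset.2 ⟨y, ?_, ?_⟩⟩
    · simp [Metric.mem_closedBall, dist_comm]
    · intro hcl
      have : U ∩ Metric.ball x (dist x y) = ∅ := by
        ext u
        simp only [Set.mem_inter_iff, Metric.mem_ball, Set.mem_empty_iff_false, iff_false]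
        rintro ⟨huU, hlt⟩
        exact absurd (hmin u huU) (not_le.2 (by simpa [dist_comm] using hlt))
      have h3 := mem_closure_iff_nhds.1 hcl U (hU.mem_nhds hyU)
      exact h3.ne_empty this
end

section
/- Let (X,d) be a metric space with at least two points. The metric d fails to be sleek (i.e., there exist x ∈ X and r > 0 such that the open ball B(x,r) is a proper subset of the interior of the closed ball B[x,r]) if and only if there exist a nonempty open set U ⊆ X and a point x ∈ U such that the function u ↦ d(x,u) attains a maximum on U. -/
theorem not_sleek_iff_max_on_open {X : Type*} [MetricSpace X] (h2 : ∃ x y : X, x ≠ y) :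
    (∃ (x : X) (r : ℝ), 0 < r ∧ Metric.ball x r ⊂ interior (Metric.closedBall x r)) ↔
    ∃ U : Set X, IsOpen U ∧ U.Nonempty ∧ ∃ x ∈ U, ∃ y ∈ U, ∀ u ∈ U, dist x u ≤ dist x y := by
  constructor
  · rintro ⟨x, r, hr, hsub⟩
    obtain ⟨y, hy, hy'⟩ := Set.exists_of_ssubset hsub
    refine ⟨interior (Metric.closedBall x r), isOpen_interior, ⟨y, hy⟩, x, ?_, y, hy, ?_⟩
    · exact Metric.ball_subset_interior_closedBall (Metric.mem_ball_self hr)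
    · intro u hu
      have hyc : dist y x ≤ r := Metric.mem_closedBall.mp (interior_subset hy)
      have hr' : r ≤ dist x y := by
        rw [dist_comm]; exact not_lt.mp (fun h => hy' h)
      have huc : dist u x ≤ r := Metric.mem_closedBall.mp (interior_subset hu)
      rw [dist_comm] at huc
      linarith
  · rintro ⟨U, hU, _, x, hxU, y, hyU, hmax⟩
    rcases lt_or_ge 0 (dist x y) with hr | hr
    · refine ⟨x, dist x y, hr, Metric.ball_subset_interior_closedBall, ?_⟩
      intro heq
      have hUc : U ⊆ Metric.closedBall x (dist x y) := fun u hu => by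
        rw [Metric.mem_closedBall, dist_comm]; exact hmax u hu
      have hyi : y ∈ interior (Metric.closedBall x (dist x y)) :=
        interior_maximal hUc hU hyU
      have := heq hyi
      simp [Metric.mem_ball, dist_comm] at this
    · have hU1 : U = {x} := by
        apply Set.eq_singleton_iff_unique_mem.mpr
        refine ⟨hxU, fun u hu => ?_⟩
        have h1 := hmax u hu
        have h2' : dist x u ≤ 0 := le_trans h1 hr
        have h3 : dist x u = 0 := le_antisymm h2' dist_nonneg
        exact (dist_eq_zero.mp h3).symm
      obtain ⟨a, b, hab⟩ := h2
      obtain ⟨z, hz⟩ : ∃ z : X, z ≠ x := by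
        by_cases h : a = x
        · exact ⟨b, by rw [← h]; exact fun e => hab e.symm⟩
        · exact ⟨a, h⟩
      refine ⟨z, dist z x, dist_pos.mpr hz, Metric.ball_subset_interior_closedBall, ?_⟩
      intro heq
      have hsub' : ({x} : Set X) ⊆ Metric.closedBall z (dist z x) := by
        intro u hu
        rw [Set.mem_singleton_iff] at hu
        subst hu
        simp [Metric.mem_closedBall, dist_comm]
      have hopen : IsOpen ({x} : Set X) := hU1 ▸ hU
      have hx : x ∈ interior (Metric.closedBall z (dist z x)) :=
        interior_maximal hsub' hopen rfl
      have := heq hx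
      rw [Metric.mem_ball, dist_comm] at this
      exact lt_irrefl _ this
end

section
/- A non-singleton metric space having an isolated point is neither round nor sleek. -/
theorem isolated_point_not_round_not_sleek {X : Type*} [MetricSpace X]
    (h2 : ∃ x y : X, x ≠ y) (x₀ : X) (hiso : IsOpen ({x₀} : Set X)) :
    ¬ (∀ (x : X) (r : ℝ), 0 < r → closure (Metric.ball x r) = Metric.closedBall x r) ∧
    ¬ (∀ (x : X) (r : ℝ), 0 < r → interior (Metric.closedBall x r) = Metric.ball x r) := by
  obtain ⟨a, b, hab⟩ := h2
  have hy : ∃ y : X, y ≠ x₀ := by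
    by_cases ha : a = x₀
    · exact ⟨b, fun hb => hab (by rw [ha, hb])⟩
    · exact ⟨a, ha⟩
  obtain ⟨y, hy⟩ := hy
  set r := dist x₀ y with hr_def
  have hr : 0 < r := dist_pos.mpr (fun h => hy h.symm)
  have hmem : x₀ ∈ Metric.closedBall y r := by
    simp [Metric.mem_closedBall, dist_comm, hr_def]
  have hnball : x₀ ∉ Metric.ball y r := by
    simp [Metric.mem_ball, dist_comm, hr_def]
  constructor
  · intro H
    have h1 := H y r hr
    have hcl : x₀ ∈ closure (Metric.ball y r) := h1 ▸ hmem
    rw [mem_closure_iff_nhds] at hcl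
    obtain ⟨z, hz1, hz2⟩ := hcl {x₀} (hiso.mem_nhds rfl)
    rw [Set.mem_singleton_iff] at hz1
    exact hnball (hz1 ▸ hz2)
  · intro H
    have h1 := H y r hr
    have hint : x₀ ∈ interior (Metric.closedBall y r) :=
      interior_maximal (Set.singleton_subset_iff.mpr hmem) hiso rfl
    rw [h1] at hint
    exact hnball hint
end

section
/- Let (X,d) be a linear metric space such that for each nonzero x ∈ X the map t ↦ d(0,tx) is strictly increasing on [0,1], and let C ⊆ X be convex. Then C is round in the subspace topology: for every point x ∈ C and r > 0, the closure in C of the open ball equals the closed ball in C. -/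
/-! Given `y ≠ x` in `C`, the points `x + t • (y - x)`, `0 ≤ t < 1`, stay in `C` by convexity, are
strictly closer to `x` than `y` is (translation invariance reduces `d(x, x + t • v)` to
`d(0, t • v)`, which is strictly increasing in `t`), and tend to `y` as `t → 1`. So every point of
the closed ball `closedBall x r` is a limit of points of the open ball. -/

open Set Metric

theorem Metric.closure_ball_eq_closedBall_of_forall_mem_closure {Y : Type*} [PseudoMetricSpace Y]
    {x : Y} (h : ∀ y, y ≠ x → y ∈ closure {z | dist z x < dist y x}) {r : ℝ} (hr : 0 < r) :
    closure (ball x r) = closedBall x r := by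
  refine (closure_minimal ball_subset_closedBall isClosed_closedBall).antisymm fun y hy => ?_
  by_cases hyx : y = x
  · exact subset_closure (hyx ▸ mem_ball_self hr)
  · exact closure_mono (fun z hz => lt_of_lt_of_le hz (mem_closedBall.mp hy)) (h y hyx)

section TranslationInvariant

variable {X : Type*} [AddCommGroup X] [Module ℝ X] [PseudoMetricSpace X]
  (hinv : ∀ a x y : X, dist (a + x) (a + y) = dist x y)
include hinv

theorem dist_add_smul_sub_lt
    (hmono : ∀ x : X, x ≠ 0 →
      StrictMonoOn (fun t : ℝ => dist (0 : X) (t • x)) (Icc 0 1))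
    {x y : X} (hyx : y ≠ x) {t : ℝ} (ht : t ∈ Ico 0 1) :
    dist (x + t • (y - x)) x < dist y x := by
  have hdist : ∀ s : ℝ, dist (x + s • (y - x)) x = dist (0 : X) (s • (y - x)) := fun s => by
    rw [dist_comm, ← hinv x 0, add_zero]
  calc dist (x + t • (y - x)) x = dist (0 : X) (t • (y - x)) := hdist t
    _ < dist (0 : X) ((1 : ℝ) • (y - x)) :=
      hmono _ (sub_ne_zero.mpr hyx) (Ico_subset_Icc_self ht) ⟨zero_le_one, le_rfl⟩ ht.2
    _ = dist y x := by rw [← hdist, one_smul, add_sub_cancel]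

theorem mem_closure_image_add_smul_sub_Ico [ContinuousSMul ℝ X] (x y : X) :
    y ∈ closure ((fun t : ℝ => x + t • (y - x)) '' Ico 0 1) := by
  have htranslate : Isometry (x + ·) :=
    Isometry.of_dist_eq fun a b => hinv x a b
  have hcont : Continuous fun t : ℝ => x + t • (y - x) :=
    htranslate.continuous.comp (continuous_id.smul continuous_const)
  refine image_closure_subset_closure_image hcont ⟨1, ?_, by simp⟩
  rw [closure_Ico zero_ne_one]
  exact ⟨zero_le_one, le_rfl⟩

end TranslationInvariant

theorem convex_subset_round_of_strictMono_general {X : Type*} [AddCommGroup X]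
    [Module ℝ X] [MetricSpace X] [ContinuousSMul ℝ X]
    (hinv : ∀ a x y : X, dist (a + x) (a + y) = dist x y)
    (hmono : ∀ x : X, x ≠ 0 →
      StrictMonoOn (fun t : ℝ => dist (0 : X) (t • x)) (Set.Icc 0 1))
    (C : Set X) (hC : Convex ℝ C) :
    ∀ (x : C) (r : ℝ), 0 < r →
      closure (Metric.ball x r) = Metric.closedBall x r := by
  intro x r hr
  refine closure_ball_eq_closedBall_of_forall_mem_closure (fun y hyx => ?_) hr
  rw [closure_subtype]
  refine closure_mono ?_ (mem_closure_image_add_smul_sub_Ico hinv (x : X) y)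
  rintro _ ⟨t, ht, rfl⟩
  have hyx' : (y : X) ≠ x := Subtype.coe_ne_coe.mpr hyx
  exact ⟨⟨_, hC.add_smul_sub_mem x.2 y.2 (Ico_subset_Icc_self ht)⟩,
    dist_add_smul_sub_lt hinv hmono hyx' ht, rfl⟩

theorem convex_subset_round_of_strictMono {X : Type*} [AddCommGroup X]
    [Module ℝ X] [MetricSpace X] [IsTopologicalAddGroup X] [ContinuousSMul ℝ X]
    (hinv : ∀ a x y : X, dist (a + x) (a + y) = dist x y)
    (hmono : ∀ x : X, x ≠ 0 →
      StrictMonoOn (fun t : ℝ => dist (0 : X) (t • x)) (Set.Icc 0 1))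
    (C : Set X) (hC : Convex ℝ C) :
    ∀ (x : C) (r : ℝ), 0 < r →
      closure (Metric.ball x r) = Metric.closedBall x r :=
  convex_subset_round_of_strictMono_general hinv hmono C hC
end

section
/- Let C be an externally convex subset of a normed linear space X. Then C is sleek in the subspace topology: for every x ∈ C and r > 0, the interior in C of the closed ball {y ∈ C : ‖x−y‖ ≤ r} equals the open ball {y ∈ C : ‖x−y‖ < r}. -/
theorem externally_convex_subset_of_normed_space_sleek {E : Type*}
    [NormedAddCommGroup E] [NormedSpace ℝ E] (C : Set E)
    (hec : ∀ x ∈ C, ∀ y ∈ C, x ≠ y →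
      ∃ z ∈ C, z ≠ x ∧ z ≠ y ∧ dist x y + dist y z = dist x z)
    (hclosed : ∀ x ∈ C, ∀ y ∈ C, x ≠ y →
      ∀ z : E, dist x y + dist y z = dist x z → z ∈ C) :
    ∀ (x : C) (r : ℝ), 0 < r →
      interior (Metric.closedBall x r) = Metric.ball x r := by
  intro x r hr
  apply Set.Subset.antisymm
  · intro y hy
    have hyc : dist y x ≤ r := Metric.mem_closedBall.1 (interior_subset hy)
    rcases lt_or_eq_of_le hyc with h | h
    · exact h
    exfalso
    rcases Metric.isOpen_iff.1 isOpen_interior y hy with ⟨ε, hε, hball⟩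
    have hdxy : dist (x : E) (y : E) = r := by
      rw [dist_comm, ← Subtype.dist_eq]; exact h
    have hxy : (x : E) ≠ (y : E) := by
      intro he
      rw [he, dist_self] at hdxy
      linarith
    set t : ℝ := ε / (2 * r) with ht
    have htpos : 0 < t := div_pos hε (by linarith)
    set z : E := (y : E) + t • ((y : E) - (x : E)) with hz
    have hxz : (x : E) - z = (1 + t) • ((x : E) - (y : E)) := by
      rw [hz]; module
    have hyz : (y : E) - z = t • ((x : E) - (y : E)) := by
      rw [hz]; module
    have hn : ‖(x : E) - (y : E)‖ = r := by rw [← dist_eq_norm]; exact hdxy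
    have h1 : dist (x : E) z = (1 + t) * r := by
      rw [dist_eq_norm, hxz, norm_smul, hn, Real.norm_eq_abs,
        abs_of_pos (by linarith)]
    have h2 : dist (y : E) z = t * r := by
      rw [dist_eq_norm, hyz, norm_smul, hn, Real.norm_eq_abs, abs_of_pos htpos]
    have hzC : z ∈ C := hclosed x x.2 y y.2 hxy z (by rw [hdxy, h1, h2]; ring)
    have hw : (⟨z, hzC⟩ : C) ∈ Metric.ball y ε := by
      rw [Metric.mem_ball, Subtype.dist_eq, dist_comm]
      have he2 : t * r = ε / 2 := by
        rw [ht]; field_simp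
      show dist (y : E) z < ε
      rw [h2, he2]; linarith
    have hwcb : (⟨z, hzC⟩ : C) ∈ Metric.closedBall x r := interior_subset (hball hw)
    rw [Metric.mem_closedBall, Subtype.dist_eq, dist_comm] at hwcb
    rw [h1] at hwcb
    nlinarith
  · exact interior_maximal Metric.ball_subset_closedBall Metric.isOpen_ball
end

section
/- Let (X,d) be a linear metric space such that t ↦ d(0,tx) is strictly increasing on [0,1] for each nonzero x, and let C ⊆ X be such that for every pair of distinct x, y ∈ C there exist tₙ ∈ (0,1) with zₙ := (1+tₙ)y − tₙx ∈ C and zₙ → y. Then d is a sleek metric for C in the subspace topology. -/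
/-!
Let `z ∈ C` lie on the sphere of radius `r > 0` about `x ∈ C`. The points
`zₙ = x + (1 + tₙ) • (z - x)` of `C` tend to `z`, and by translation invariance and strict
monotonicity of `t ↦ d(0, t v)` they lie at distance `> r` from `x`. So `z` is a limit of points
outside the closed ball and is not interior to it; hence the interior is the open ball.
-/

open Filter Metric

lemma Metric.interior_closedBall_eq_ball_of_sphere_subset {Y : Type*} [PseudoMetricSpace Y]
    {x : Y} {r : ℝ} (h : sphere x r ⊆ closure (closedBall x r)ᶜ) :
    interior (closedBall x r) = ball x r := by
  refine subset_antisymm ?_ ball_subset_interior_closedBall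
  rw [← closedBall_sdiff_sphere]
  intro z hz
  refine ⟨interior_subset hz, fun hs => ?_⟩
  rw [interior_eq_compl_closure_compl] at hz
  exact hz (h hs)

lemma dist_eq_dist_zero_sub {X : Type*} [AddCommGroup X] [MetricSpace X]
    (hinv : ∀ a x y : X, dist (a + x) (a + y) = dist x y) (x y : X) :
    dist y x = dist 0 (y - x) := by
  simpa [dist_comm] using hinv x (y - x) 0

section

variable {X : Type*} [AddCommGroup X] [Module ℝ X] [MetricSpace X]

lemma dist_zero_lt_dist_zero_smul
    (hmono : ∀ x : X, x ≠ 0 →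
      StrictMonoOn (fun t : ℝ => dist (0 : X) (t • x)) (Set.Icc 0 1))
    {v : X} (hv : v ≠ 0) {s : ℝ} (hs : 1 < s) : dist 0 v < dist 0 (s • v) := by
  have hs₀ : 0 < s := one_pos.trans hs
  have h := hmono (s • v) (smul_ne_zero hs₀.ne' hv)
    ⟨inv_nonneg.2 hs₀.le, inv_le_one_of_one_le₀ hs.le⟩ ⟨zero_le_one, le_rfl⟩
    (inv_lt_one_of_one_lt₀ hs)
  simpa [smul_smul, inv_mul_cancel₀ hs₀.ne'] using h

lemma dist_lt_dist_one_add_smul_sub_smul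
    (hinv : ∀ a x y : X, dist (a + x) (a + y) = dist x y)
    (hmono : ∀ x : X, x ≠ 0 →
      StrictMonoOn (fun t : ℝ => dist (0 : X) (t • x)) (Set.Icc 0 1))
    {x z : X} (hxz : x ≠ z) {t : ℝ} (ht : 0 < t) :
    dist z x < dist ((1 + t) • z - t • x) x := by
  have hz : (1 + t) • z - t • x - x = (1 + t) • (z - x) := by module
  rw [dist_eq_dist_zero_sub hinv x z, dist_eq_dist_zero_sub hinv x, hz]
  exact dist_zero_lt_dist_zero_smul hmono (sub_ne_zero.2 hxz.symm) (lt_add_of_pos_right 1 ht)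

end

theorem sleek_subset_of_strictMono_general {X : Type*} [AddCommGroup X]
    [Module ℝ X] [MetricSpace X]
    (hinv : ∀ a x y : X, dist (a + x) (a + y) = dist x y)
    (hmono : ∀ x : X, x ≠ 0 →
      StrictMonoOn (fun t : ℝ => dist (0 : X) (t • x)) (Set.Icc 0 1))
    (C : Set X)
    (hC : ∀ x ∈ C, ∀ y ∈ C, x ≠ y → ∃ t : ℕ → ℝ,
      (∀ n, t n ∈ Set.Ioo (0 : ℝ) 1) ∧
      (∀ n, (1 + t n) • y - t n • x ∈ C) ∧
      Filter.Tendsto (fun n => (1 + t n) • y - t n • x) Filter.atTop (nhds y)) :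
    ∀ (x : C) (r : ℝ), 0 < r →
      interior (Metric.closedBall x r) = Metric.ball x r := by
  intro x r hr
  refine interior_closedBall_eq_ball_of_sphere_subset fun z hz => ?_
  rw [mem_sphere, Subtype.dist_eq] at hz
  have hxz : (x : X) ≠ z := fun h => hr.ne' (hz ▸ h ▸ dist_self _)
  obtain ⟨t, ht, hmem, hlim⟩ := hC x x.2 z z.2 hxz
  refine mem_closure_of_tendsto (f := fun n => (⟨_, hmem n⟩ : C))
    (tendsto_subtype_rng.2 hlim) (Eventually.of_forall fun n => ?_)
  rw [Set.mem_compl_iff, mem_closedBall, not_le, Subtype.dist_eq, ← hz]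
  exact dist_lt_dist_one_add_smul_sub_smul hinv hmono hxz (ht n).1

theorem sleek_subset_of_strictMono {X : Type*} [AddCommGroup X]
    [Module ℝ X] [MetricSpace X] [IsTopologicalAddGroup X] [ContinuousSMul ℝ X]
    (hinv : ∀ a x y : X, dist (a + x) (a + y) = dist x y)
    (hmono : ∀ x : X, x ≠ 0 →
      StrictMonoOn (fun t : ℝ => dist (0 : X) (t • x)) (Set.Icc 0 1))
    (C : Set X)
    (hC : ∀ x ∈ C, ∀ y ∈ C, x ≠ y → ∃ t : ℕ → ℝ,
      (∀ n, t n ∈ Set.Ioo (0 : ℝ) 1) ∧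
      (∀ n, (1 + t n) • y - t n • x ∈ C) ∧
      Filter.Tendsto (fun n => (1 + t n) • y - t n • x) Filter.atTop (nhds y)) :
    ∀ (x : C) (r : ℝ), 0 < r →
      interior (Metric.closedBall x r) = Metric.ball x r :=
  sleek_subset_of_strictMono_general hinv hmono C hC
end

section
/- Let (X,d) be an externally convex metric space. If d is round for X, then d is sleek for X. -/
theorem externally_convex_round_implies_sleek {X : Type*} [MetricSpace X]
    (hec : ∀ x y : X, x ≠ y →
      ∃ z : X, z ≠ x ∧ z ≠ y ∧ dist x y + dist y z = dist x z)
    (hround : ∀ (x : X) (r : ℝ), 0 < r →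
      closure (Metric.ball x r) = Metric.closedBall x r) :
    ∀ (x : X) (r : ℝ), 0 < r →
      interior (Metric.closedBall x r) = Metric.ball x r := by
  intro x r hr
  refine le_antisymm ?_ Metric.ball_subset_interior_closedBall
  intro y hy
  by_contra hlt
  have hyr : dist y x ≤ r := Metric.mem_closedBall.1 (interior_subset hy)
  have heq : dist y x = r := le_antisymm hyr (not_lt.1 fun h => hlt h)
  have hxy : x ≠ y := by
    intro h
    rw [h, dist_self] at heq
    linarith
  obtain ⟨z, hzx, hzy, hdist⟩ := hec x y hxy
  have hs0 : 0 < dist y z := dist_pos.2 (Ne.symm hzy)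
  have hycl : y ∈ closure (Metric.ball z (dist y z)) := by
    rw [hround z _ hs0]
    simp [Metric.mem_closedBall, dist_comm]
  obtain ⟨ε, hε, hball⟩ := Metric.isOpen_iff.1 isOpen_interior y hy
  obtain ⟨w, hw, hwy⟩ := Metric.mem_closure_iff.1 hycl ε hε
  have hwcb : w ∈ Metric.closedBall x r := by
    apply interior_subset
    apply hball
    simpa [Metric.mem_ball, dist_comm] using hwy
  have h1 : dist x z ≤ dist x w + dist w z := dist_triangle x w z
  have h2 : dist x w ≤ r := by simpa [dist_comm] using hwcb
  have h3 : dist w z < dist y z := hw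
  have h4 : dist x y = r := by rw [dist_comm]; exact heq
  linarith [hdist ▸ h1, h4 ▸ (rfl : dist x y = dist x y)]
end

section
/- Every metrically convex and externally convex complete metric space is sleek. -/
theorem convex_externally_convex_complete_sleek {X : Type*} [MetricSpace X]
    [CompleteSpace X]
    (hconv : ∀ x y : X, x ≠ y →
      ∃ z : X, z ≠ x ∧ z ≠ y ∧ dist x z + dist z y = dist x y)
    (hec : ∀ x y : X, x ≠ y →
      ∃ z : X, z ≠ x ∧ z ≠ y ∧ dist x y + dist y z = dist x z) :
    ∀ (x : X) (r : ℝ), 0 < r →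
      interior (Metric.closedBall x r) = Metric.ball x r := by
  intro x r hr
  refine subset_antisymm ?_ Metric.ball_subset_interior_closedBall
  intro y hy
  by_contra hyball
  have hyr : dist y x ≤ r := Metric.mem_closedBall.mp (interior_subset hy)
  have hnlt : ¬ dist y x < r := fun h => hyball (Metric.mem_ball.mpr h)
  have heq : dist y x = r := le_antisymm hyr (not_lt.mp hnlt)
  have hxy : x ≠ y := by
    intro h; subst h; rw [dist_self] at heq; linarith
  obtain ⟨ε, hε, hball⟩ := Metric.isOpen_iff.mp isOpen_interior y hy
  obtain ⟨z, hzx, hzy, hz⟩ := hec x y hxy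
  -- hz : dist x y + dist y z = dist x z
  have hxyr : dist x y = r := by rw [dist_comm]; exact heq
  -- transitivity of betweenness (seen from y)
  have htrans : ∀ (u v p : X), dist y v + dist v u = dist y u →
      dist y p + dist p v = dist y v → dist y p + dist p u = dist y u := by
    intro u v p h1 h2
    have ha := dist_triangle y p u
    have hb := dist_triangle p v u
    refine le_antisymm (by linarith) (by linarith)
  -- points strictly between y and z (w.r.t. y) are at distance ≥ ε from y
  have hfar : ∀ w : X, dist y w + dist w z = dist y z → w ≠ y → ε ≤ dist y w := by
    intro w hw hwy
    by_contra hlt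
    push_neg at hlt
    have hmem : w ∈ Metric.closedBall x r :=
      interior_subset (hball (by simpa [Metric.mem_ball, dist_comm] using hlt))
    have h1 : dist x z ≤ dist x w + dist w z := dist_triangle x w z
    have h2 : dist w x ≤ r := Metric.mem_closedBall.mp hmem
    have h3 : 0 < dist y w := dist_pos.mpr (Ne.symm hwy)
    have h4 : dist x w = dist w x := dist_comm x w
    linarith
  -- the infimum function
  set t : X → ℝ := fun u => sInf ((fun v => dist y v) ''
    {v | dist y v + dist v u = dist y u ∧ v ≠ y}) with ht
  have hbdd0 : ∀ u : X, BddBelow ((fun v => dist y v) ''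
      {v | dist y v + dist v u = dist y u ∧ v ≠ y}) := by
    intro u
    refine ⟨0, ?_⟩
    rintro d ⟨v, _, rfl⟩
    exact dist_nonneg
  -- key step: choose near-infimum between-points
  have hkey : ∀ (n : ℕ) (u : X), ∃ v : X,
      (dist y u + dist u z = dist y z ∧ u ≠ y) →
      (dist y v + dist v u = dist y u ∧ v ≠ y ∧ dist y v < t u + (1/2 : ℝ)^n) := by
    intro n u
    by_cases h : dist y u + dist u z = dist y z ∧ u ≠ y
    · have hne : ((fun v => dist y v) ''
          {v | dist y v + dist v u = dist y u ∧ v ≠ y}).Nonempty :=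
        ⟨dist y u, u, ⟨by simp, h.2⟩, rfl⟩
      obtain ⟨d, ⟨v, hv, rfl⟩, hd⟩ :=
        Real.lt_sInf_add_pos hne (pow_pos (by norm_num : (0:ℝ) < 1/2) n)
      exact ⟨v, fun _ => ⟨hv.1, hv.2, hd⟩⟩
    · exact ⟨z, fun hh => absurd hh h⟩
  choose f hf using hkey
  set w : ℕ → X := fun n => Nat.rec z (fun k u => f k u) n with hwdef
  have hw0 : w 0 = z := rfl
  have hwS : ∀ n, w (n+1) = f n (w n) := fun _ => rfl
  -- invariant
  have hinv : ∀ n, dist y (w n) + dist (w n) z = dist y z ∧ w n ≠ y := by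
    intro n
    induction n with
    | zero => exact ⟨by simp [hw0], by rw [hw0]; exact hzy⟩
    | succ n ih =>
      have hs := hf n (w n) ih
      rw [hwS]
      exact ⟨htrans z (w n) (f n (w n)) ih.1 hs.1, hs.2.1⟩
  have hstep : ∀ n, dist y (w (n+1)) + dist (w (n+1)) (w n) = dist y (w n) ∧
      w (n+1) ≠ y ∧ dist y (w (n+1)) < t (w n) + (1/2 : ℝ)^n := by
    intro n
    rw [hwS]
    exact hf n (w n) (hinv n)
  -- chain: w m is between y and w n for n ≤ m
  have hchain : ∀ n m, n ≤ m → dist y (w m) + dist (w m) (w n) = dist y (w n) := by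
    intro n m h
    induction m, h using Nat.le_induction with
    | base => simp
    | succ m hm ih => exact htrans (w n) (w m) (w (m+1)) ih (hstep m).1
  set a : ℕ → ℝ := fun n => dist y (w n) with hadef
  have hanti : Antitone a := by
    intro n m h
    have h1 := hchain n m h
    have h2 : (0:ℝ) ≤ dist (w m) (w n) := dist_nonneg
    simp only [hadef]
    linarith
  have hεa : ∀ n, ε ≤ a n := fun n => hfar (w n) (hinv n).1 (hinv n).2
  have hbddr : BddBelow (Set.range a) := by
    refine ⟨ε, ?_⟩
    rintro d ⟨n, rfl⟩
    exact hεa n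
  set L : ℝ := ⨅ n, a n with hLdef
  have hL : Filter.Tendsto a Filter.atTop (nhds L) := tendsto_atTop_ciInf hanti hbddr
  have hLa : ∀ n, L ≤ a n := fun n => ciInf_le hbddr n
  -- Cauchy
  have hcauchy : CauchySeq w := by
    refine cauchySeq_of_le_tendsto_0 (fun N => a N - L) ?_ ?_
    · intro n m N hn hm
      rcases le_total n m with h | h
      · have h1 := hchain n m h
        have h2 : a m ≥ L := hLa m
        have h3 : a n ≤ a N := hanti hn
        rw [dist_comm]
        simp only [hadef] at h1 h2 h3 ⊢
        linarith
      · have h1 := hchain m n h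
        have h2 : a n ≥ L := hLa n
        have h3 : a m ≤ a N := hanti hm
        simp only [hadef] at h1 h2 h3 ⊢
        linarith
    · simpa using hL.sub_const L
  obtain ⟨u, hu⟩ := cauchySeq_tendsto_of_complete hcauchy
  have hau : Filter.Tendsto a Filter.atTop (nhds (dist y u)) :=
    tendsto_const_nhds.dist hu
  have hLu : dist y u = L := tendsto_nhds_unique hau hL
  have hεL : ε ≤ L := ge_of_tendsto' hL hεa
  have huy : u ≠ y := by
    intro h
    rw [h, dist_self] at hLu
    linarith
  -- u is between y and each w n
  have husegn : ∀ n, dist y u + dist u (w n) = dist y (w n) := by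
    intro n
    have hc : IsClosed {v : X | dist y v + dist v (w n) = dist y (w n)} := by
      apply isClosed_eq
      · exact (continuous_const.dist continuous_id).add (continuous_id.dist continuous_const)
      · exact continuous_const
    exact hc.mem_of_tendsto hu (Filter.eventually_atTop.mpr ⟨n, fun m hm => hchain n m hm⟩)
  -- strict between-point of y and u
  obtain ⟨v, hvy, hvu, hv⟩ := hconv y u (Ne.symm huy)
  -- v is between y and each w n
  have hvseg : ∀ n, dist y v + dist v (w n) = dist y (w n) :=
    fun n => htrans (w n) u v (husegn n) hv
  have hvlow : ∀ n : ℕ, L - (1/2 : ℝ)^n < dist y v := by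
    intro n
    have h1 := (hstep n).2.2
    have h2 : t (w n) ≤ dist y v := csInf_le (hbdd0 (w n)) ⟨v, ⟨hvseg n, hvy⟩, rfl⟩
    have h3 : L ≤ a (n+1) := hLa (n+1)
    simp only [hadef] at h3
    linarith
  have hvL : L ≤ dist y v := by
    have htto : Filter.Tendsto (fun n : ℕ => L - (1/2 : ℝ)^n) Filter.atTop (nhds L) := by
      have : Filter.Tendsto (fun n : ℕ => ((1:ℝ)/2)^n) Filter.atTop (nhds 0) :=
        tendsto_pow_atTop_nhds_zero_of_lt_one (by norm_num) (by norm_num)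
      simpa using tendsto_const_nhds.sub this
    exact le_of_tendsto' htto (fun n => le_of_lt (hvlow n))
  have hdvu : 0 < dist v u := dist_pos.mpr hvu
  rw [hLu] at hv
  linarith
end

section
/- Let (X,d) be a metric space having no isolated point. Then d is a round metric for X if and only if d is a round metric for every proper nonempty open subset of X (in the subspace metric). -/
theorem round_iff_round_on_proper_open {X : Type*} [MetricSpace X]
    (hni : ∀ x : X, ¬ IsOpen ({x} : Set X)) :
    (∀ (x : X) (r : ℝ), 0 < r →
        closure (Metric.ball x r) = Metric.closedBall x r) ↔
    (∀ O : Set X, IsOpen O → O.Nonempty → O ≠ Set.univ →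
      ∀ (x : O) (r : ℝ), 0 < r →
        closure (Metric.ball x r) = Metric.closedBall x r) := by
  constructor
  · intro hX O hO _ _ x r hr
    refine subset_antisymm Metric.closure_ball_subset_closedBall ?_
    intro y hy
    rw [Metric.mem_closedBall] at hy
    rw [Metric.mem_closure_iff]
    intro ε hε
    obtain ⟨δ, hδ, hδO⟩ := Metric.isOpen_iff.mp hO (y : X) y.2
    have hyX : (y : X) ∈ closure (Metric.ball (x : X) r) := by
      rw [hX x r hr, Metric.mem_closedBall, ← Subtype.dist_eq]; exact hy
    obtain ⟨b, hb, hdb⟩ := Metric.mem_closure_iff.mp hyX (min ε δ) (lt_min hε hδ)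
    have hbO : b ∈ O := hδO (Metric.mem_ball'.mpr (lt_of_lt_of_le hdb (min_le_right _ _)))
    exact ⟨⟨b, hbO⟩, by simpa [Metric.mem_ball, Subtype.dist_eq] using hb,
      by rw [Subtype.dist_eq]; exact lt_of_lt_of_le hdb (min_le_left _ _)⟩
  · intro hO x r hr
    refine subset_antisymm Metric.closure_ball_subset_closedBall ?_
    intro y hy
    rw [Metric.mem_closedBall] at hy
    -- find z ∉ {x, y}
    have hz : ∃ z : X, z ≠ x ∧ z ≠ y := by
      by_contra h
      push_neg at h
      by_cases hxy : y = x
      · have : ({x} : Set X) = Set.univ := by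
          ext w; simp only [Set.mem_singleton_iff, Set.mem_univ, iff_true]
          rcases eq_or_ne w x with h' | h'
          · exact h'
          · exact hxy ▸ (h w h')
        exact hni x (this ▸ isOpen_univ)
      · have : ({x} : Set X) = ({y} : Set X)ᶜ := by
          ext w
          simp only [Set.mem_singleton_iff, Set.mem_compl_iff]
          constructor
          · rintro rfl h'; exact hxy h'.symm
          · intro h'
            rcases eq_or_ne w x with h'' | h''
            · exact h''
            · exact absurd (h w h'') h'
        exact hni x (this ▸ isOpen_compl_singleton)
    obtain ⟨z, hzx, hzy⟩ := hz
    set O : Set X := {z}ᶜ with hOdef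
    have hOopen : IsOpen O := isOpen_compl_singleton
    have hxO : x ∈ O := fun h => hzx (Set.mem_singleton_iff.mp h).symm
    have hyO : y ∈ O := fun h => hzy (Set.mem_singleton_iff.mp h).symm
    have hne : O.Nonempty := ⟨x, hxO⟩
    have hprop : O ≠ Set.univ := fun h => (h ▸ (Set.mem_univ z) : z ∈ O) rfl
    have key := hO O hOopen hne hprop ⟨x, hxO⟩ r hr
    have hy' : (⟨y, hyO⟩ : O) ∈ closure (Metric.ball (⟨x, hxO⟩ : O) r) := by
      rw [key, Metric.mem_closedBall, Subtype.dist_eq]; exact hy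
    rw [Metric.mem_closure_iff] at hy' ⊢
    intro ε hε
    obtain ⟨b, hb, hdb⟩ := hy' ε hε
    exact ⟨(b : X), by simpa [Metric.mem_ball, Subtype.dist_eq] using hb,
      by simpa [Subtype.dist_eq] using hdb⟩
end

section
/- Let (X,d) be a metric space having no isolated point. Then d is a sleek metric for X if and only if d is a sleek metric for every proper nonempty open subset of X (in the subspace metric). -/
open Metric Set

lemma subtype_closedBall' {X : Type*} [MetricSpace X] (O : Set X) (x : O) (r : ℝ) :
    (Metric.closedBall x r : Set O) = Subtype.val ⁻¹' Metric.closedBall (x : X) r := by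
  ext y
  simp [Metric.mem_closedBall, Subtype.dist_eq]

lemma subtype_ball' {X : Type*} [MetricSpace X] (O : Set X) (x : O) (r : ℝ) :
    (Metric.ball x r : Set O) = Subtype.val ⁻¹' Metric.ball (x : X) r := by
  ext y
  simp [Metric.mem_ball, Subtype.dist_eq]

lemma subtype_interior' {X : Type*} [TopologicalSpace X] {O : Set X} (hO : IsOpen O)
    (s : Set X) :
    interior (Subtype.val ⁻¹' s : Set O) = Subtype.val ⁻¹' interior s :=
  (hO.isOpenMap_subtype_val.preimage_interior_eq_interior_preimage
    continuous_subtype_val s).symm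

theorem sleek_iff_sleek_on_proper_open {X : Type*} [MetricSpace X]
    (hni : ∀ x : X, ¬ IsOpen ({x} : Set X)) :
    (∀ (x : X) (r : ℝ), 0 < r →
        interior (Metric.closedBall x r) = Metric.ball x r) ↔
    (∀ O : Set X, IsOpen O → O.Nonempty → O ≠ Set.univ →
      ∀ (x : O) (r : ℝ), 0 < r →
        interior (Metric.closedBall x r) = Metric.ball x r) := by
  constructor
  · intro h O hO _ _ x r hr
    rw [subtype_closedBall', subtype_ball', subtype_interior' hO, h x r hr]
  · intro h x r hr
    refine Set.Subset.antisymm ?_ Metric.ball_subset_interior_closedBall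
    intro y hy
    by_cases hxy : y = x
    · simp [Metric.mem_ball, hxy, hr]
    · have hd : 0 < dist x y := dist_pos.2 (Ne.symm hxy)
      obtain ⟨z, hz1, hz2⟩ : ∃ z, z ≠ y ∧ dist z y < dist x y := by
        by_contra hc
        push_neg at hc
        refine hni y (Metric.isOpen_singleton_iff.2 ⟨dist x y, hd, fun b hb => ?_⟩)
        by_contra hb'
        exact absurd hb (not_lt.2 (hc b hb'))
      have hzx : z ≠ x := fun hzx => by rw [hzx] at hz2; exact lt_irrefl _ hz2
      set O : Set X := {z}ᶜ with hOdef
      have hOo : IsOpen O := isOpen_compl_singleton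
      have hxO : x ∈ O := fun hx => hzx (by simpa using hx.symm)
      have hyO : y ∈ O := fun hyz => hz1 (by simpa using hyz.symm)
      have hne : O ≠ Set.univ := by
        intro hu
        have : z ∈ O := hu ▸ mem_univ z
        exact this rfl
      have key := h O hOo ⟨x, hxO⟩ hne ⟨x, hxO⟩ r hr
      rw [subtype_closedBall', subtype_ball', subtype_interior' hOo] at key
      have hmem : (⟨y, hyO⟩ : O) ∈ Subtype.val ⁻¹' interior (Metric.closedBall x r) := hy
      rw [key] at hmem
      exact hmem
end

section
/- Let (X,d) be a metrically convex metric space such that for every pair of distinct points x, y ∈ X and every r > 0, the set S(x,y) ∩ B(y,r) is nonempty, where S(x,y) = {z ∈ X \ {x,y} : d(x,z) + d(z,y) = d(x,y)}. Then d is a round metric for X. -/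
theorem round_of_segment_intersects_balls {X : Type*} [MetricSpace X]
    (hconv : ∀ x y : X, x ≠ y →
      ∃ z : X, z ≠ x ∧ z ≠ y ∧ dist x z + dist z y = dist x y)
    (hS : ∀ x y : X, x ≠ y → ∀ r : ℝ, 0 < r →
      (({z : X | z ≠ x ∧ z ≠ y ∧ dist x z + dist z y = dist x y} ∩
        Metric.ball y r)).Nonempty) :
    ∀ (x : X) (r : ℝ), 0 < r →
      closure (Metric.ball x r) = Metric.closedBall x r := by
  intro x r hr
  apply Set.Subset.antisymm
  · exact closure_minimal Metric.ball_subset_closedBall Metric.isClosed_closedBall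
  · intro y hy
    rcases lt_or_eq_of_le (Metric.mem_closedBall.mp hy) with h | h
    · exact subset_closure (Metric.mem_ball.mpr h)
    · have hxy : x ≠ y := by
        intro e
        rw [← e, dist_self] at h
        exact hr.ne h
      rw [Metric.mem_closure_iff]
      intro ε hε
      obtain ⟨z, ⟨hzx, hzy, hsum⟩, hzball⟩ := hS x y hxy ε hε
      refine ⟨z, ?_, ?_⟩
      · rw [Metric.mem_ball]
        have hpos : 0 < dist z y := dist_pos.mpr hzy
        have : dist x z < dist x y := by linarith
        rw [dist_comm]
        rw [dist_comm y x] at h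
        linarith
      · rw [Metric.mem_ball] at hzball
        rw [dist_comm] at hzball
        exact hzball
end

section
/- Let (X,d) be an externally convex metric space such that for every pair of distinct points x, y ∈ X and every r > 0, the set S_c(x,y) ∩ B(y,r) is nonempty, where S_c(x,y) = {z ∉ {x,y} : d(x,y) + d(y,z) = d(x,z)} ∪ {z' ∉ {x,y} : d(y,x) + d(x,z') = d(y,z')}. Then d is a sleek metric for X. -/
theorem sleek_of_external_segment_intersects_balls {X : Type*} [MetricSpace X]
    (hec : ∀ x y : X, x ≠ y →
      ∃ z : X, z ≠ x ∧ z ≠ y ∧ dist x y + dist y z = dist x z)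
    (hS : ∀ x y : X, x ≠ y → ∀ r : ℝ, 0 < r →
      ((({z : X | z ≠ x ∧ z ≠ y ∧ dist x y + dist y z = dist x z} ∪
         {z' : X | z' ≠ x ∧ z' ≠ y ∧ dist y x + dist x z' = dist y z'}) ∩
        Metric.ball y r)).Nonempty) :
    ∀ (x : X) (r : ℝ), 0 < r →
      interior (Metric.closedBall x r) = Metric.ball x r := by
  intro x r hr
  apply Set.Subset.antisymm
  · intro y hy
    rw [Metric.mem_ball]
    by_contra hyr
    push_neg at hyr
    have hxy : x ≠ y := by
      intro h; subst h; simp at hyr; linarith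
    obtain ⟨ε₀, hε₀, hball⟩ := Metric.isOpen_iff.mp isOpen_interior y hy
    set ε := min ε₀ r with hε
    have hεpos : 0 < ε := lt_min hε₀ hr
    obtain ⟨z, hz, hzball⟩ := hS x y hxy ε hεpos
    have hzy : dist y z < ε := Metric.mem_ball'.mp hzball
    have hzcb : z ∈ Metric.closedBall x r := by
      have : z ∈ Metric.ball y ε₀ := by
        rw [Metric.mem_ball']; exact lt_of_lt_of_le hzy (min_le_left _ _)
      exact interior_subset (hball this)
    rw [Metric.mem_closedBall] at hzcb
    rcases hz with ⟨hzx, hzy', heq⟩ | ⟨hzx, hzy', heq⟩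
    · have h1 : 0 < dist y z := dist_pos.mpr (Ne.symm hzy')
      have h2 := dist_comm x z
      have h3 := dist_comm x y
      linarith
    · have : dist y z ≥ r := by
        have := dist_nonneg (x := x) (y := z)
        nlinarith [dist_comm y x]
      linarith [lt_of_lt_of_le hzy (min_le_right ε₀ r)]
  · exact Metric.ball_subset_interior_closedBall
end
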